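/- Assume the DG mesh setup below. Let M, K, B be m×m real antisymmetric matrices, A an m×m real symmetric matrix, and S : ℝ^m → ℝ continuously differentiable. Suppose the ℝ^m-valued mesh function z_h satisfies the semi-discrete DG scheme. Define, for each j and t, E_{h,j}(t) = ∫_{I_j} ( S(z_h) − (1/2)(K ∂_x z_h)·z_h ) dx − ( (1/2) K̂z_h·z_h⁻ + (1/4)(B ∂_t[z_h])·[z_h] )_{j+1/2} + ( (1/2) K̂z_h·z_h⁺ − (1/4)(B ∂_t[z_h])·[z_h] )_{j−1/2}. Then for every j and t, d/dt E_{h,j} + (1/2) 𝓕(z_h, ∂_t z_h)_{j+1/2} − (1/2) 𝓕(z_h, ∂_t z_h)_{j−1/2} = 0, where at each interface 𝓕(z, ž) = ((K z⁺)·ž⁺ + (K z⁻)·ž⁻)/2 − K̂z·{ž} + K̂ž·{z}. -/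

import Mathlib

open Matrix MeasureTheory

/-- `f : ℝ → ℝ` is (globally) a polynomial of degree at most `k`. -/
def IsPolyDegLE (k : ℕ) (f : ℝ → ℝ) : Prop :=
  ∃ p : Polynomial ℝ, p.natDegree ≤ k ∧ ∀ x : ℝ, f x = Polynomial.eval x p

/-- Index of the left interface of cell `j` (periodic, with `N` cells): the interface
`x_{j−1/2}` is interface number `(j + N − 1) % N` where interface `i` sits at node `i+1`. -/
def lidx (N j : ℕ) : ℕ := (j + N - 1) % N

/-- Left trace `v⁻` of a mesh function at interface `j` (located at node `xs (j+1)`). -/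
noncomputable def trLv {m : ℕ} (xs : ℕ → ℝ) (z : ℕ → ℝ → ℝ → Fin m → ℝ)
    (j : ℕ) (t : ℝ) : Fin m → ℝ :=
  z j t (xs (j + 1))

/-- Right trace `v⁺` of a mesh function at interface `j`, periodic with `N` cells:
the value of cell `(j+1) % N` at its left endpoint. -/
noncomputable def trRv {m : ℕ} (N : ℕ) (xs : ℕ → ℝ) (z : ℕ → ℝ → ℝ → Fin m → ℝ)
    (j : ℕ) (t : ℝ) : Fin m → ℝ :=
  z ((j + 1) % N) t (xs ((j + 1) % N))

/-- Jump `[v] = v⁺ − v⁻` at interface `j`. -/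
noncomputable def jmpv {m : ℕ} (N : ℕ) (xs : ℕ → ℝ) (z : ℕ → ℝ → ℝ → Fin m → ℝ)
    (j : ℕ) (t : ℝ) : Fin m → ℝ :=
  trRv N xs z j t - trLv xs z j t

/-- Average `{v} = (v⁺ + v⁻)/2` at interface `j`. -/
noncomputable def avgv {m : ℕ} (N : ℕ) (xs : ℕ → ℝ) (z : ℕ → ℝ → ℝ → Fin m → ℝ)
    (j : ℕ) (t : ℝ) : Fin m → ℝ :=
  (1/2 : ℝ) • (trRv N xs z j t + trLv xs z j t)

/-- The numerical flux `K̂v = K{v} + A[v] + B ∂ₜ[v]` at interface `j`. -/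
noncomputable def numFluxv {m : ℕ} (N : ℕ) (xs : ℕ → ℝ)
    (K A B : Matrix (Fin m) (Fin m) ℝ) (z : ℕ → ℝ → ℝ → Fin m → ℝ)
    (j : ℕ) (t : ℝ) : Fin m → ℝ :=
  K.mulVec (avgv N xs z j t) + A.mulVec (jmpv N xs z j t)
    + B.mulVec (deriv (fun s => jmpv N xs z j s) t)

/-- An `ℝ^m`-valued mesh function: in each cell, smooth in `t` and, for each `t`,
componentwise a polynomial of degree at most `k` in `x`. -/
def IsMeshFun {m : ℕ} (N k : ℕ) (z : ℕ → ℝ → ℝ → Fin m → ℝ) : Prop :=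
  (∀ j < N, ∀ (t : ℝ) (i : Fin m), IsPolyDegLE k (fun x => z j t x i)) ∧
  (∀ j < N, ∀ (x : ℝ) (i : Fin m), ContDiff ℝ (⊤ : ℕ∞) (fun t => z j t x i))

/-- The gradient of `S : ℝ^m → ℝ`, as the vector of partial derivatives. -/
noncomputable def gradS {m : ℕ} (S : (Fin m → ℝ) → ℝ) (v : Fin m → ℝ) : Fin m → ℝ :=
  fun i => fderiv ℝ S v (Pi.single i 1)

/-- The semi-discrete DG scheme for `M zₜ + K zₓ = ∇S(z)` with numerical flux
`K̂z = K{z} + A[z] + B ∂ₜ[z]` and gradient function `gS`. -/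
def SatisfiesDG {m : ℕ} (N k : ℕ) (xs : ℕ → ℝ)
    (M K A B : Matrix (Fin m) (Fin m) ℝ)
    (gS : (Fin m → ℝ) → Fin m → ℝ) (z : ℕ → ℝ → ℝ → Fin m → ℝ) : Prop :=
  ∀ j < N, ∀ t : ℝ, ∀ φ : ℝ → Fin m → ℝ, (∀ i, IsPolyDegLE k (fun x => φ x i)) →
    (∫ x in (xs j)..(xs (j+1)), M.mulVec (deriv (fun s => z j s x) t) ⬝ᵥ φ x)
      - (∫ x in (xs j)..(xs (j+1)), K.mulVec (z j t x) ⬝ᵥ deriv φ x)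
      + numFluxv N xs K A B z j t ⬝ᵥ φ (xs (j+1))
      - numFluxv N xs K A B z (lidx N j) t ⬝ᵥ φ (xs j)
    = ∫ x in (xs j)..(xs (j+1)), gS (z j t x) ⬝ᵥ φ x

/-- `𝓕(z,ž) = {(Kz)·ž} − K̂z·{ž} + K̂ž·{z}` at interface `j`. -/
noncomputable def calF {m : ℕ} (N : ℕ) (xs : ℕ → ℝ)
    (K A B : Matrix (Fin m) (Fin m) ℝ)
    (z zv : ℕ → ℝ → ℝ → Fin m → ℝ) (j : ℕ) (t : ℝ) : ℝ :=
  ((K.mulVec (trRv N xs z j t) ⬝ᵥ trRv N xs zv j t)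
      + (K.mulVec (trLv xs z j t) ⬝ᵥ trLv xs zv j t)) / 2
    - numFluxv N xs K A B z j t ⬝ᵥ avgv N xs zv j t
    + numFluxv N xs K A B zv j t ⬝ᵥ avgv N xs z j t


/-! ### Auxiliary machinery -/

open Finset intervalIntegral in
lemma dui {F F' : ℝ → ℝ → ℝ} {a b t₀ : ℝ} (hF : Continuous (Function.uncurry F))
    (hF' : Continuous (Function.uncurry F'))
    (hd : ∀ t x, HasDerivAt (fun s => F s x) (F' t x) t) :
    HasDerivAt (fun s => ∫ x in a..b, F s x) (∫ x in a..b, F' t₀ x) t₀ := by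
  obtain ⟨C, hC⟩ : ∃ C, ∀ p ∈ (Metric.closedBall t₀ 1 ×ˢ Set.uIcc a b),
      ‖Function.uncurry F' p‖ ≤ C :=
    ((isCompact_closedBall t₀ 1).prod isCompact_uIcc).exists_bound_of_continuousOn
      hF'.continuousOn
  refine (intervalIntegral.hasDerivAt_integral_of_dominated_loc_of_deriv_le
    (F := F) (F' := F') (bound := fun _ => C) (s := Metric.ball t₀ 1) (Metric.ball_mem_nhds t₀ one_pos) ?_ ?_ ?_ ?_ ?_ ?_).2
  · exact Filter.Eventually.of_forall fun t =>
      ((hF.comp (continuous_const.prodMk continuous_id)).aestronglyMeasurable)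
  · exact (hF.comp (continuous_const.prodMk continuous_id)).intervalIntegrable a b
  · exact (hF'.comp (continuous_const.prodMk continuous_id)).aestronglyMeasurable
  · refine Filter.Eventually.of_forall fun x hx s hs => ?_
    exact hC (s, x) ⟨Metric.ball_subset_closedBall hs, Set.uIoc_subset_uIcc hx⟩
  · exact intervalIntegrable_const
  · exact Filter.Eventually.of_forall fun x _ s _ => hd s x

lemma poly_rep {k : ℕ} {f : ℝ → ℝ → ℝ} (h1 : ∀ t, IsPolyDegLE k (f t))
    (h2 : ∀ x, ContDiff ℝ (⊤:ℕ∞) (fun t => f t x)) :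
    ∃ c : ℕ → ℝ → ℝ, (∀ n, ContDiff ℝ (⊤:ℕ∞) (c n)) ∧
      ∀ t x, f t x = ∑ n ∈ Finset.range (k+1), c n t * x ^ n := by
  set v : Fin (k+1) → ℝ := fun i => (i : ℕ) with hv
  have hinj : Set.InjOn v (Finset.univ : Finset (Fin (k+1))) := by
    intro i _ j _ hij
    exact Fin.ext (Nat.cast_injective hij)
  refine ⟨fun n t => ∑ i : Fin (k+1), (Lagrange.basis Finset.univ v i).coeff n * f t (v i),
    fun n => ContDiff.sum fun i _ => contDiff_const.mul (h2 (v i)), fun t x => ?_⟩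
  obtain ⟨p, hpk, hpf⟩ := h1 t
  have hdeg : p.degree < (Finset.univ : Finset (Fin (k+1))).card := by
    simp only [Finset.card_univ, Fintype.card_fin]
    exact lt_of_le_of_lt (Polynomial.degree_le_natDegree) (by exact_mod_cast Nat.lt_succ_of_le hpk)
  have hrep := Lagrange.eq_interpolate hinj hdeg
  have hfx : f t x = ∑ i : Fin (k+1), f t (v i) * Polynomial.eval x (Lagrange.basis Finset.univ v i) := by
    rw [hpf x, hrep]
    rw [Lagrange.interpolate_apply, Polynomial.eval_finset_sum]
    refine Finset.sum_congr rfl fun i _ => ?_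
    rw [Polynomial.eval_mul, Polynomial.eval_C, hpf]
  rw [hfx]
  have hbd : ∀ i : Fin (k+1), Polynomial.eval x (Lagrange.basis Finset.univ v i)
      = ∑ n ∈ Finset.range (k+1), (Lagrange.basis Finset.univ v i).coeff n * x ^ n := by
    intro i
    refine Polynomial.eval_eq_sum_range' ?_ x
    have := Lagrange.natDegree_basis hinj (Finset.mem_univ i)
    simp only [Finset.card_univ, Fintype.card_fin] at this
    omega
  simp_rw [hbd, Finset.mul_sum, Finset.sum_mul]
  rw [Finset.sum_comm]
  refine Finset.sum_congr rfl fun n _ => Finset.sum_congr rfl fun i _ => by ring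

section Machinery

variable {m : ℕ}

noncomputable def PT (k : ℕ) (c : Fin m → ℕ → ℝ → ℝ) (t x : ℝ) : Fin m → ℝ :=
  fun i => ∑ n ∈ Finset.range (k+1), c i n t * x ^ n

noncomputable def PX (k : ℕ) (c : Fin m → ℕ → ℝ → ℝ) (t x : ℝ) : Fin m → ℝ :=
  fun i => ∑ n ∈ Finset.range (k+1), c i n t * (n * x ^ (n-1))

noncomputable def DC (c : Fin m → ℕ → ℝ → ℝ) : Fin m → ℕ → ℝ → ℝ :=
  fun i n => deriv (c i n)

lemma dc_smooth {c : Fin m → ℕ → ℝ → ℝ} (hc : ∀ i n, ContDiff ℝ (⊤:ℕ∞) (c i n)) :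
    ∀ i n, ContDiff ℝ (⊤:ℕ∞) (DC c i n) :=
  fun i n => (contDiff_infty_iff_deriv.mp (hc i n)).2

lemma pt_hasDerivAt_t {k : ℕ} {c : Fin m → ℕ → ℝ → ℝ} (hc : ∀ i n, ContDiff ℝ (⊤:ℕ∞) (c i n))
    (t x : ℝ) (i : Fin m) :
    HasDerivAt (fun s => PT k c s x i) (PT k (DC c) t x i) t :=
  HasDerivAt.fun_sum fun n _ =>
    (((hc i n).differentiable (by simp) t).hasDerivAt).mul_const _

lemma px_hasDerivAt_t {k : ℕ} {c : Fin m → ℕ → ℝ → ℝ} (hc : ∀ i n, ContDiff ℝ (⊤:ℕ∞) (c i n))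
    (t x : ℝ) (i : Fin m) :
    HasDerivAt (fun s => PX k c s x i) (PX k (DC c) t x i) t :=
  HasDerivAt.fun_sum fun n _ =>
    (((hc i n).differentiable (by simp) t).hasDerivAt).mul_const _

lemma pt_hasDerivAt_x {k : ℕ} (c : Fin m → ℕ → ℝ → ℝ) (t x : ℝ) (i : Fin m) :
    HasDerivAt (fun y => PT k c t y i) (PX k c t x i) x :=
  HasDerivAt.fun_sum fun n _ => (hasDerivAt_pow n x).const_mul _

lemma pt_cont {k : ℕ} {c : Fin m → ℕ → ℝ → ℝ} (hc : ∀ i n, ContDiff ℝ (⊤:ℕ∞) (c i n)) (i : Fin m) :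
    Continuous (fun p : ℝ × ℝ => PT k c p.1 p.2 i) :=
  continuous_finset_sum _ fun n _ =>
    (((hc i n).continuous).comp continuous_fst).mul ((continuous_pow n).comp continuous_snd)

lemma px_cont {k : ℕ} {c : Fin m → ℕ → ℝ → ℝ} (hc : ∀ i n, ContDiff ℝ (⊤:ℕ∞) (c i n)) (i : Fin m) :
    Continuous (fun p : ℝ × ℝ => PX k c p.1 p.2 i) :=
  continuous_finset_sum _ fun n _ =>
    (((hc i n).continuous).comp continuous_fst).mul
      ((continuous_const.mul ((continuous_pow (n-1)).comp continuous_snd)))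

lemma pt_cont_x {k : ℕ} (c : Fin m → ℕ → ℝ → ℝ) (t : ℝ) (i : Fin m) :
    Continuous fun x => PT k c t x i :=
  continuous_finset_sum _ fun n _ => continuous_const.mul (continuous_pow n)

lemma px_cont_x {k : ℕ} (c : Fin m → ℕ → ℝ → ℝ) (t : ℝ) (i : Fin m) :
    Continuous fun x => PX k c t x i :=
  continuous_finset_sum _ fun n _ =>
    continuous_const.mul (continuous_const.mul (continuous_pow (n-1)))

lemma pt_poly {k : ℕ} (c : Fin m → ℕ → ℝ → ℝ) (t : ℝ) (i : Fin m) :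
    IsPolyDegLE k (fun x => PT k c t x i) := by
  refine ⟨∑ n ∈ Finset.range (k+1), Polynomial.C (c i n t) * Polynomial.X ^ n, ?_, fun x => ?_⟩
  · refine (Polynomial.natDegree_sum_le _ _).trans ?_
    simp only [Finset.fold_max_le]
    refine ⟨Nat.zero_le _, fun n hn => ?_⟩
    refine (Polynomial.natDegree_C_mul_le _ _).trans ?_
    simp only [Polynomial.natDegree_X_pow]
    exact Nat.lt_succ_iff.mp (Finset.mem_range.mp hn)
  · simp [PT, Polynomial.eval_finset_sum]

lemma ptv_hasDerivAt_t {k : ℕ} {c : Fin m → ℕ → ℝ → ℝ} (hc : ∀ i n, ContDiff ℝ (⊤:ℕ∞) (c i n))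
    (t x : ℝ) : HasDerivAt (fun s => PT k c s x) (PT k (DC c) t x) t :=
  hasDerivAt_pi.2 fun i => pt_hasDerivAt_t hc t x i

lemma ptv_deriv_t {k : ℕ} {c : Fin m → ℕ → ℝ → ℝ} (hc : ∀ i n, ContDiff ℝ (⊤:ℕ∞) (c i n))
    (t x : ℝ) : deriv (fun s => PT k c s x) t = PT k (DC c) t x :=
  (ptv_hasDerivAt_t hc t x).deriv

lemma ptv_deriv_x {k : ℕ} (c : Fin m → ℕ → ℝ → ℝ) (t x : ℝ) :
    deriv (fun y => PT k c t y) x = PX k c t x :=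
  (hasDerivAt_pi.2 fun i => pt_hasDerivAt_x c t x i).deriv

lemma hasDerivAt_dot {u v : ℝ → Fin m → ℝ} {u' v' : Fin m → ℝ} {t : ℝ}
    (hu : ∀ i, HasDerivAt (fun s => u s i) (u' i) t)
    (hv : ∀ i, HasDerivAt (fun s => v s i) (v' i) t) :
    HasDerivAt (fun s => u s ⬝ᵥ v s) (u' ⬝ᵥ v t + u t ⬝ᵥ v') t := by
  simp only [dotProduct]
  rw [← Finset.sum_add_distrib]
  exact HasDerivAt.fun_sum fun i _ => (hu i).mul (hv i)

lemma hasDerivAt_mulVec {u : ℝ → Fin m → ℝ} {u' : Fin m → ℝ} {t : ℝ}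
    (M : Matrix (Fin m) (Fin m) ℝ)
    (hu : ∀ i, HasDerivAt (fun s => u s i) (u' i) t) (i : Fin m) :
    HasDerivAt (fun s => M.mulVec (u s) i) (M.mulVec u' i) t := by
  simp only [Matrix.mulVec, dotProduct]
  exact HasDerivAt.fun_sum fun l _ => ((hu l).const_mul _)

lemma flip_skew {M : Matrix (Fin m) (Fin m) ℝ} (hM : Mᵀ = -M) (u v : Fin m → ℝ) :
    M.mulVec u ⬝ᵥ v = -(M.mulVec v ⬝ᵥ u) := by
  rw [dotProduct_comm, Matrix.dotProduct_mulVec, ← Matrix.mulVec_transpose, hM,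
    Matrix.neg_mulVec, neg_dotProduct]

lemma flip_symm {M : Matrix (Fin m) (Fin m) ℝ} (hM : Mᵀ = M) (u v : Fin m → ℝ) :
    M.mulVec u ⬝ᵥ v = M.mulVec v ⬝ᵥ u := by
  rw [dotProduct_comm, Matrix.dotProduct_mulVec, ← Matrix.mulVec_transpose, hM]

lemma skew_self {M : Matrix (Fin m) (Fin m) ℝ} (hM : Mᵀ = -M) (u : Fin m → ℝ) :
    M.mulVec u ⬝ᵥ u = 0 := by
  have := flip_skew hM u u; linarith

lemma grad_cont {S : (Fin m → ℝ) → ℝ} (hS : ContDiff ℝ 1 S) (i : Fin m) :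
    Continuous fun v => gradS S v i :=
  (hS.continuous_fderiv one_ne_zero).clm_apply continuous_const

lemma fderiv_eq_grad_dot (S : (Fin m → ℝ) → ℝ) (v u : Fin m → ℝ) :
    fderiv ℝ S v u = gradS S v ⬝ᵥ u := by
  have hu : u = ∑ i, u i • (Pi.single i 1 : Fin m → ℝ) := by
    rw [← Finset.univ_sum_single u]
    refine Finset.sum_congr rfl fun i _ => ?_
    rw [← Pi.single_smul, smul_eq_mul, mul_one]
    simp
  conv_lhs => rw [hu]
  rw [map_sum]
  simp only [_root_.map_smul, smul_eq_mul]
  simp [gradS, dotProduct, mul_comm]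

lemma grad_chain {S : (Fin m → ℝ) → ℝ} (hS : ContDiff ℝ 1 S) {u : ℝ → Fin m → ℝ}
    {u' : Fin m → ℝ} {t : ℝ} (hu : HasDerivAt u u' t) :
    HasDerivAt (fun s => S (u s)) (gradS S (u t) ⬝ᵥ u') t := by
  have h1 := ((hS.differentiable one_ne_zero) (u t)).hasFDerivAt
  have h2 := h1.comp_hasDerivAt t hu
  have h3 : HasDerivAt (fun s => S (u s)) (fderiv ℝ S (u t) u') t := h2
  rwa [fderiv_eq_grad_dot] at h3

lemma cont_dot {α : Type*} [TopologicalSpace α] {u v : α → Fin m → ℝ}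
    (hu : ∀ i, Continuous fun x => u x i) (hv : ∀ i, Continuous fun x => v x i) :
    Continuous fun x => u x ⬝ᵥ v x := by
  unfold dotProduct
  exact continuous_finset_sum _ fun i _ => (hu i).mul (hv i)

lemma cont_mulVec {α : Type*} [TopologicalSpace α] {u : α → Fin m → ℝ}
    (M : Matrix (Fin m) (Fin m) ℝ) (hu : ∀ i, Continuous fun x => u x i) (i : Fin m) :
    Continuous fun x => M.mulVec (u x) i := by
  unfold Matrix.mulVec dotProduct
  exact continuous_finset_sum _ fun l _ => continuous_const.mul (hu l)

lemma cell_rep {N k : ℕ} {z : ℕ → ℝ → ℝ → Fin m → ℝ} (hz : IsMeshFun N k z) {j : ℕ}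
    (hj : j < N) :
    ∃ c : Fin m → ℕ → ℝ → ℝ, (∀ i n, ContDiff ℝ (⊤:ℕ∞) (c i n)) ∧
      ∀ t x, z j t x = PT k c t x := by
  choose c hc1 hc2 using fun i : Fin m =>
    poly_rep (f := fun t x => z j t x i) (fun t => hz.1 j hj t i)
      (fun x => (hz.2 j hj x i).of_le (by simp))
  exact ⟨fun i => c i, hc1, fun t x => funext fun i => hc2 i t x⟩

noncomputable def JMP (k : ℕ) (cL cR : Fin m → ℕ → ℝ → ℝ) (pL pR s : ℝ) : Fin m → ℝ :=
  PT k cR s pR - PT k cL s pL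

noncomputable def AVG (k : ℕ) (cL cR : Fin m → ℕ → ℝ → ℝ) (pL pR s : ℝ) : Fin m → ℝ :=
  (1/2 : ℝ) • (PT k cR s pR + PT k cL s pL)

noncomputable def FLX (k : ℕ) (K A B : Matrix (Fin m) (Fin m) ℝ)
    (cL cR : Fin m → ℕ → ℝ → ℝ) (pL pR s : ℝ) : Fin m → ℝ :=
  K.mulVec (AVG k cL cR pL pR s) + A.mulVec (JMP k cL cR pL pR s)
    + B.mulVec (JMP k (DC cL) (DC cR) pL pR s)

lemma jmp_hasDerivAt {k : ℕ} {cL cR : Fin m → ℕ → ℝ → ℝ}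
    (hcL : ∀ i n, ContDiff ℝ (⊤:ℕ∞) (cL i n)) (hcR : ∀ i n, ContDiff ℝ (⊤:ℕ∞) (cR i n))
    (pL pR t : ℝ) :
    ∀ i, HasDerivAt (fun s => JMP k cL cR pL pR s i) (JMP k (DC cL) (DC cR) pL pR t i) t :=
  fun i => (pt_hasDerivAt_t hcR t pR i).sub (pt_hasDerivAt_t hcL t pL i)

lemma jmp_derivv {k : ℕ} {cL cR : Fin m → ℕ → ℝ → ℝ}
    (hcL : ∀ i n, ContDiff ℝ (⊤:ℕ∞) (cL i n)) (hcR : ∀ i n, ContDiff ℝ (⊤:ℕ∞) (cR i n))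
    (pL pR t : ℝ) :
    deriv (fun s => JMP k cL cR pL pR s) t = JMP k (DC cL) (DC cR) pL pR t :=
  (hasDerivAt_pi.2 (jmp_hasDerivAt hcL hcR pL pR t)).deriv

lemma avg_hasDerivAt {k : ℕ} {cL cR : Fin m → ℕ → ℝ → ℝ}
    (hcL : ∀ i n, ContDiff ℝ (⊤:ℕ∞) (cL i n)) (hcR : ∀ i n, ContDiff ℝ (⊤:ℕ∞) (cR i n))
    (pL pR t : ℝ) :
    ∀ i, HasDerivAt (fun s => AVG k cL cR pL pR s i) (AVG k (DC cL) (DC cR) pL pR t i) t :=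
  fun i => HasDerivAt.const_mul ((1/2 : ℝ))
    ((pt_hasDerivAt_t hcR t pR i).add (pt_hasDerivAt_t hcL t pL i))

lemma flx_hasDerivAt {k : ℕ} {cL cR : Fin m → ℕ → ℝ → ℝ}
    (hcL : ∀ i n, ContDiff ℝ (⊤:ℕ∞) (cL i n)) (hcR : ∀ i n, ContDiff ℝ (⊤:ℕ∞) (cR i n))
    (K A B : Matrix (Fin m) (Fin m) ℝ) (pL pR t : ℝ) :
    ∀ i, HasDerivAt (fun s => FLX k K A B cL cR pL pR s i)
      (FLX k K A B (DC cL) (DC cR) pL pR t i) t :=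
  fun i => ((hasDerivAt_mulVec K (avg_hasDerivAt hcL hcR pL pR t) i).add
      (hasDerivAt_mulVec A (jmp_hasDerivAt hcL hcR pL pR t) i)).add
    (hasDerivAt_mulVec B (jmp_hasDerivAt (dc_smooth hcL) (dc_smooth hcR) pL pR t) i)

end Machinery

/-- Local energy conservation (Theorem 3.2 of the paper):
`d/dt E_{h,j} + (1/2)𝓕(z_h, ∂ₜz_h)_{j+1/2} − (1/2)𝓕(z_h, ∂ₜz_h)_{j−1/2} = 0`. -/
theorem stmt7 {m N k : ℕ} (hm : 0 < m) (hN : 0 < N)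
    (xs : ℕ → ℝ) (hxs : ∀ i < N, xs i < xs (i+1))
    (M K A B : Matrix (Fin m) (Fin m) ℝ)
    (hM : Mᵀ = -M) (hK : Kᵀ = -K) (hB : Bᵀ = -B) (hA : Aᵀ = A)
    (S : (Fin m → ℝ) → ℝ) (hS : ContDiff ℝ 1 S)
    (z : ℕ → ℝ → ℝ → Fin m → ℝ) (hz : IsMeshFun N k z)
    (hscheme : SatisfiesDG N k xs M K A B (gradS S) z) :
    ∀ j < N, ∀ t : ℝ,
      deriv (fun s =>
          (∫ x in (xs j)..(xs (j+1)),
            (S (z j s x) - (1/2) * (K.mulVec (deriv (fun y => z j s y) x) ⬝ᵥ z j s x)))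
          - ((1/2) * (numFluxv N xs K A B z j s ⬝ᵥ trLv xs z j s)
              + (1/4) * (B.mulVec (deriv (fun r => jmpv N xs z j r) s) ⬝ᵥ jmpv N xs z j s))
          + ((1/2) * (numFluxv N xs K A B z (lidx N j) s ⬝ᵥ trRv N xs z (lidx N j) s)
              - (1/4) * (B.mulVec (deriv (fun r => jmpv N xs z (lidx N j) r) s)
                  ⬝ᵥ jmpv N xs z (lidx N j) s))) t
        + (1/2) * calF N xs K A B z (fun jj tt x => deriv (fun s => z jj s x) tt) j t
        - (1/2) * calF N xs K A B z (fun jj tt x => deriv (fun s => z jj s x) tt) (lidx N j) t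
      = 0 := by
  intro j hj t
  have hjr : (j+1) % N < N := Nat.mod_lt _ hN
  have hjl : lidx N j < N := Nat.mod_lt _ hN
  have hjl1 : (lidx N j + 1) % N = j := by
    unfold lidx
    rw [Nat.mod_add_mod]
    have h1 : j + N - 1 + 1 = j + N := by omega
    rw [h1, Nat.add_mod_right]
    exact Nat.mod_eq_of_lt hj
  obtain ⟨c, hc, hzc⟩ := cell_rep hz hj
  obtain ⟨cr, hcr, hzr⟩ := cell_rep hz hjr
  obtain ⟨cl, hcl, hzl⟩ := cell_rep hz hjl
  have hzv1 : ∀ (s x : ℝ), deriv (fun r => z j r x) s = PT k (DC c) s x := by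
    intro s x
    have h : (fun r => z j r x) = fun r => PT k c r x := funext fun r => hzc r x
    rw [h]; exact ptv_deriv_t hc s x
  have hzv2 : ∀ (s x : ℝ), deriv (fun r => z ((j+1) % N) r x) s = PT k (DC cr) s x := by
    intro s x
    have h : (fun r => z ((j+1) % N) r x) = fun r => PT k cr r x := funext fun r => hzr r x
    rw [h]; exact ptv_deriv_t hcr s x
  have hzv3 : ∀ (s x : ℝ), deriv (fun r => z (lidx N j) r x) s = PT k (DC cl) s x := by
    intro s x
    have h : (fun r => z (lidx N j) r x) = fun r => PT k cl r x := funext fun r => hzl r x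
    rw [h]; exact ptv_deriv_t hcl s x
  -- right interface, mesh function z
  have htrL_r : ∀ s : ℝ, trLv xs z j s = PT k c s (xs (j+1)) := by
    intro s; unfold trLv; exact hzc s _
  have htrR_r : ∀ s : ℝ, trRv N xs z j s = PT k cr s (xs ((j+1) % N)) := by
    intro s; unfold trRv; exact hzr s _
  have hjmp_r : ∀ s : ℝ, jmpv N xs z j s = JMP k c cr (xs (j+1)) (xs ((j+1) % N)) s := by
    intro s; unfold jmpv JMP; rw [htrR_r s, htrL_r s]
  have hjmpd_r : ∀ s : ℝ, deriv (fun r => jmpv N xs z j r) s = JMP k (DC c) (DC cr) (xs (j+1)) (xs ((j+1) % N)) s := by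
    intro s
    have h : (fun r => jmpv N xs z j r) = fun r => JMP k c cr (xs (j+1)) (xs ((j+1) % N)) r := funext hjmp_r
    rw [h]; exact jmp_derivv hc hcr _ _ s
  have havg_r : ∀ s : ℝ, avgv N xs z j s = AVG k c cr (xs (j+1)) (xs ((j+1) % N)) s := by
    intro s; unfold avgv AVG; rw [htrR_r s, htrL_r s]
  have hflux_r : ∀ s : ℝ, numFluxv N xs K A B z j s = FLX k K A B c cr (xs (j+1)) (xs ((j+1) % N)) s := by
    intro s; unfold numFluxv FLX; rw [havg_r s, hjmp_r s, hjmpd_r s]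
  -- left interface, mesh function z
  have htrL_l : ∀ s : ℝ, trLv xs z (lidx N j) s = PT k cl s (xs (lidx N j + 1)) := by
    intro s; unfold trLv; exact hzl s _
  have htrR_l : ∀ s : ℝ, trRv N xs z (lidx N j) s = PT k c s (xs j) := by
    intro s; unfold trRv; rw [hjl1]; exact hzc s _
  have hjmp_l : ∀ s : ℝ, jmpv N xs z (lidx N j) s = JMP k cl c (xs (lidx N j + 1)) (xs j) s := by
    intro s; unfold jmpv JMP; rw [htrR_l s, htrL_l s]
  have hjmpd_l : ∀ s : ℝ, deriv (fun r => jmpv N xs z (lidx N j) r) s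
      = JMP k (DC cl) (DC c) (xs (lidx N j + 1)) (xs j) s := by
    intro s
    have h : (fun r => jmpv N xs z (lidx N j) r) = fun r => JMP k cl c (xs (lidx N j + 1)) (xs j) r := funext hjmp_l
    rw [h]; exact jmp_derivv hcl hc _ _ s
  have havg_l : ∀ s : ℝ, avgv N xs z (lidx N j) s = AVG k cl c (xs (lidx N j + 1)) (xs j) s := by
    intro s; unfold avgv AVG; rw [htrR_l s, htrL_l s]
  have hflux_l : ∀ s : ℝ, numFluxv N xs K A B z (lidx N j) s = FLX k K A B cl c (xs (lidx N j + 1)) (xs j) s := by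
    intro s; unfold numFluxv FLX; rw [havg_l s, hjmp_l s, hjmpd_l s]
  -- right interface, time-derivative mesh function
  have htrLv_r : ∀ s : ℝ, trLv xs (fun jj tt x => deriv (fun s => z jj s x) tt) j s = PT k (DC c) s (xs (j+1)) := by
    intro s; unfold trLv; exact hzv1 s _
  have htrRv_r : ∀ s : ℝ, trRv N xs (fun jj tt x => deriv (fun s => z jj s x) tt) j s = PT k (DC cr) s (xs ((j+1) % N)) := by
    intro s; unfold trRv; exact hzv2 s _
  have hjmpv_r : ∀ s : ℝ, jmpv N xs (fun jj tt x => deriv (fun s => z jj s x) tt) j s = JMP k (DC c) (DC cr) (xs (j+1)) (xs ((j+1) % N)) s := by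
    intro s; unfold jmpv JMP; rw [htrRv_r s, htrLv_r s]
  have hjmpvd_r : ∀ s : ℝ, deriv (fun r => jmpv N xs (fun jj tt x => deriv (fun s => z jj s x) tt) j r) s
      = JMP k (DC (DC c)) (DC (DC cr)) (xs (j+1)) (xs ((j+1) % N)) s := by
    intro s
    have h : (fun r => jmpv N xs (fun jj tt x => deriv (fun s => z jj s x) tt) j r)
        = fun r => JMP k (DC c) (DC cr) (xs (j+1)) (xs ((j+1) % N)) r := funext hjmpv_r
    rw [h]; exact jmp_derivv (dc_smooth hc) (dc_smooth hcr) _ _ s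
  have havgv_r : ∀ s : ℝ, avgv N xs (fun jj tt x => deriv (fun s => z jj s x) tt) j s = AVG k (DC c) (DC cr) (xs (j+1)) (xs ((j+1) % N)) s := by
    intro s; unfold avgv AVG; rw [htrRv_r s, htrLv_r s]
  have hfluxv_r : ∀ s : ℝ, numFluxv N xs K A B (fun jj tt x => deriv (fun s => z jj s x) tt) j s
      = FLX k K A B (DC c) (DC cr) (xs (j+1)) (xs ((j+1) % N)) s := by
    intro s; unfold numFluxv FLX; rw [havgv_r s, hjmpv_r s, hjmpvd_r s]
  -- left interface, time-derivative mesh function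
  have htrLv_l : ∀ s : ℝ, trLv xs (fun jj tt x => deriv (fun s => z jj s x) tt) (lidx N j) s = PT k (DC cl) s (xs (lidx N j + 1)) := by
    intro s; unfold trLv; exact hzv3 s _
  have htrRv_l : ∀ s : ℝ, trRv N xs (fun jj tt x => deriv (fun s => z jj s x) tt) (lidx N j) s = PT k (DC c) s (xs j) := by
    intro s; unfold trRv; rw [hjl1]; exact hzv1 s _
  have hjmpv_l : ∀ s : ℝ, jmpv N xs (fun jj tt x => deriv (fun s => z jj s x) tt) (lidx N j) s = JMP k (DC cl) (DC c) (xs (lidx N j + 1)) (xs j) s := by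
    intro s; unfold jmpv JMP; rw [htrRv_l s, htrLv_l s]
  have hjmpvd_l : ∀ s : ℝ, deriv (fun r => jmpv N xs (fun jj tt x => deriv (fun s => z jj s x) tt) (lidx N j) r) s
      = JMP k (DC (DC cl)) (DC (DC c)) (xs (lidx N j + 1)) (xs j) s := by
    intro s
    have h : (fun r => jmpv N xs (fun jj tt x => deriv (fun s => z jj s x) tt) (lidx N j) r)
        = fun r => JMP k (DC cl) (DC c) (xs (lidx N j + 1)) (xs j) r := funext hjmpv_l
    rw [h]; exact jmp_derivv (dc_smooth hcl) (dc_smooth hc) _ _ s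
  have havgv_l : ∀ s : ℝ, avgv N xs (fun jj tt x => deriv (fun s => z jj s x) tt) (lidx N j) s = AVG k (DC cl) (DC c) (xs (lidx N j + 1)) (xs j) s := by
    intro s; unfold avgv AVG; rw [htrRv_l s, htrLv_l s]
  have hfluxv_l : ∀ s : ℝ, numFluxv N xs K A B (fun jj tt x => deriv (fun s => z jj s x) tt) (lidx N j) s
      = FLX k K A B (DC cl) (DC c) (xs (lidx N j + 1)) (xs j) s := by
    intro s; unfold numFluxv FLX; rw [havgv_l s, hjmpv_l s, hjmpvd_l s]
  -- calF rewrites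
  have hcalF_r : calF N xs K A B z (fun jj tt x => deriv (fun s => z jj s x) tt) j t
      = ((K.mulVec (PT k cr t (xs ((j+1) % N))) ⬝ᵥ (PT k (DC cr) t (xs ((j+1) % N)))) + (K.mulVec (PT k c t (xs (j+1))) ⬝ᵥ (PT k (DC c) t (xs (j+1))))) / 2
        - FLX k K A B c cr (xs (j+1)) (xs ((j+1) % N)) t ⬝ᵥ AVG k (DC c) (DC cr) (xs (j+1)) (xs ((j+1) % N)) t
        + FLX k K A B (DC c) (DC cr) (xs (j+1)) (xs ((j+1) % N)) t ⬝ᵥ AVG k c cr (xs (j+1)) (xs ((j+1) % N)) t := by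
    unfold calF
    rw [htrR_r t, htrL_r t, htrRv_r t, htrLv_r t, hflux_r t, hfluxv_r t, havg_r t, havgv_r t]
  have hcalF_l : calF N xs K A B z (fun jj tt x => deriv (fun s => z jj s x) tt) (lidx N j) t
      = ((K.mulVec (PT k c t (xs j)) ⬝ᵥ (PT k (DC c) t (xs j))) + (K.mulVec (PT k cl t (xs (lidx N j + 1))) ⬝ᵥ (PT k (DC cl) t (xs (lidx N j + 1))))) / 2
        - FLX k K A B cl c (xs (lidx N j + 1)) (xs j) t ⬝ᵥ AVG k (DC cl) (DC c) (xs (lidx N j + 1)) (xs j) t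
        + FLX k K A B (DC cl) (DC c) (xs (lidx N j + 1)) (xs j) t ⬝ᵥ AVG k cl c (xs (lidx N j + 1)) (xs j) t := by
    unfold calF
    rw [htrR_l t, htrL_l t, htrRv_l t, htrLv_l t, hflux_l t, hfluxv_l t, havg_l t, havgv_l t]
  -- rewrite the energy functional
  have hInt : ∀ s : ℝ, (∫ x in (xs j)..(xs (j+1)),
        (S (z j s x) - (1/2) * (K.mulVec (deriv (fun y => z j s y) x) ⬝ᵥ z j s x)))
      = ∫ x in (xs j)..(xs (j+1)),
        (S (PT k c s x) - (1/2) * (K.mulVec (PX k c s x) ⬝ᵥ PT k c s x)) := by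
    intro s
    refine intervalIntegral.integral_congr fun x _ => ?_
    have h : (fun y => z j s y) = fun y => PT k c s y := funext fun y => hzc s y
    rw [hzc s x, h, ptv_deriv_x]
  have hEfun : (fun s =>
        (∫ x in (xs j)..(xs (j+1)),
            (S (z j s x) - (1/2) * (K.mulVec (deriv (fun y => z j s y) x) ⬝ᵥ z j s x)))
          - ((1/2) * (numFluxv N xs K A B z j s ⬝ᵥ trLv xs z j s)
              + (1/4) * (B.mulVec (deriv (fun r => jmpv N xs z j r) s) ⬝ᵥ jmpv N xs z j s))
          + ((1/2) * (numFluxv N xs K A B z (lidx N j) s ⬝ᵥ trRv N xs z (lidx N j) s)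
              - (1/4) * (B.mulVec (deriv (fun r => jmpv N xs z (lidx N j) r) s)
                  ⬝ᵥ jmpv N xs z (lidx N j) s))) = (fun s =>
        (∫ x in (xs j)..(xs (j+1)),
            (S (PT k c s x) - (1/2) * (K.mulVec (PX k c s x) ⬝ᵥ PT k c s x)))
          - ((1/2) * (FLX k K A B c cr (xs (j+1)) (xs ((j+1) % N)) s ⬝ᵥ PT k c s (xs (j+1)))
              + (1/4) * (B.mulVec (JMP k (DC c) (DC cr) (xs (j+1)) (xs ((j+1) % N)) s) ⬝ᵥ JMP k c cr (xs (j+1)) (xs ((j+1) % N)) s))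
          + ((1/2) * (FLX k K A B cl c (xs (lidx N j + 1)) (xs j) s ⬝ᵥ PT k c s (xs j))
              - (1/4) * (B.mulVec (JMP k (DC cl) (DC c) (xs (lidx N j + 1)) (xs j) s) ⬝ᵥ JMP k cl c (xs (lidx N j + 1)) (xs j) s))) := by
    funext s
    rw [hInt s, hflux_r s, htrL_r s, hjmpd_r s, hjmp_r s, hflux_l s, htrR_l s, hjmpd_l s,
      hjmp_l s]
  -- the derivative of the (rewritten) energy functional
  have hI : HasDerivAt (fun s => ∫ x in (xs j)..(xs (j+1)),
        (S (PT k c s x) - (1/2) * (K.mulVec (PX k c s x) ⬝ᵥ PT k c s x)))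
      (∫ x in (xs j)..(xs (j+1)),
            (gradS S (PT k c t x) ⬝ᵥ PT k (DC c) t x
              - (1/2) * (K.mulVec (PX k (DC c) t x) ⬝ᵥ PT k c t x
                  + K.mulVec (PX k c t x) ⬝ᵥ PT k (DC c) t x))) t := by
    refine dui (F := fun s x => S (PT k c s x) - (1/2) * (K.mulVec (PX k c s x) ⬝ᵥ PT k c s x))
      (F' := fun s x => gradS S (PT k c s x) ⬝ᵥ PT k (DC c) s x
        - (1/2) * (K.mulVec (PX k (DC c) s x) ⬝ᵥ PT k c s x
            + K.mulVec (PX k c s x) ⬝ᵥ PT k (DC c) s x)) ?_ ?_ ?_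
    · exact (hS.continuous.comp (continuous_pi fun i => pt_cont hc i)).sub
        (continuous_const.mul (cont_dot (fun i => cont_mulVec K (fun i' => px_cont hc i') i)
          (fun i => pt_cont hc i)))
    · exact (cont_dot (fun i => (grad_cont hS i).comp (continuous_pi fun i' => pt_cont hc i'))
          (fun i => pt_cont (dc_smooth hc) i)).sub
        (continuous_const.mul
          ((cont_dot (fun i => cont_mulVec K (fun i' => px_cont (dc_smooth hc) i') i)
              (fun i => pt_cont hc i)).add
            (cont_dot (fun i => cont_mulVec K (fun i' => px_cont hc i') i)
              (fun i => pt_cont (dc_smooth hc) i))))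
    · intro s x
      exact (grad_chain hS (ptv_hasDerivAt_t hc s x)).sub
        (HasDerivAt.const_mul ((1/2 : ℝ))
          (hasDerivAt_dot (fun i => hasDerivAt_mulVec K (fun i' => px_hasDerivAt_t hc s x i') i)
            (fun i => pt_hasDerivAt_t hc s x i)))
  have hXr : HasDerivAt
      (fun s => FLX k K A B c cr (xs (j+1)) (xs ((j+1) % N)) s ⬝ᵥ PT k c s (xs (j+1)))
      (FLX k K A B (DC c) (DC cr) (xs (j+1)) (xs ((j+1) % N)) t ⬝ᵥ PT k c t (xs (j+1))
        + FLX k K A B c cr (xs (j+1)) (xs ((j+1) % N)) t ⬝ᵥ PT k (DC c) t (xs (j+1))) t :=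
    hasDerivAt_dot (flx_hasDerivAt hc hcr K A B (xs (j+1)) (xs ((j+1) % N)) t)
      (fun i => pt_hasDerivAt_t hc t (xs (j+1)) i)
  have hYr : HasDerivAt
      (fun s => B.mulVec (JMP k (DC c) (DC cr) (xs (j+1)) (xs ((j+1) % N)) s)
        ⬝ᵥ JMP k c cr (xs (j+1)) (xs ((j+1) % N)) s)
      (B.mulVec (JMP k (DC (DC c)) (DC (DC cr)) (xs (j+1)) (xs ((j+1) % N)) t)
          ⬝ᵥ JMP k c cr (xs (j+1)) (xs ((j+1) % N)) t
        + B.mulVec (JMP k (DC c) (DC cr) (xs (j+1)) (xs ((j+1) % N)) t)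
          ⬝ᵥ JMP k (DC c) (DC cr) (xs (j+1)) (xs ((j+1) % N)) t) t :=
    hasDerivAt_dot
      (fun i => hasDerivAt_mulVec B (jmp_hasDerivAt (dc_smooth hc) (dc_smooth hcr)
        (xs (j+1)) (xs ((j+1) % N)) t) i)
      (jmp_hasDerivAt hc hcr (xs (j+1)) (xs ((j+1) % N)) t)
  have hXl : HasDerivAt
      (fun s => FLX k K A B cl c (xs (lidx N j + 1)) (xs j) s ⬝ᵥ PT k c s (xs j))
      (FLX k K A B (DC cl) (DC c) (xs (lidx N j + 1)) (xs j) t ⬝ᵥ PT k c t (xs j)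
        + FLX k K A B cl c (xs (lidx N j + 1)) (xs j) t ⬝ᵥ PT k (DC c) t (xs j)) t :=
    hasDerivAt_dot (flx_hasDerivAt hcl hc K A B (xs (lidx N j + 1)) (xs j) t)
      (fun i => pt_hasDerivAt_t hc t (xs j) i)
  have hYl : HasDerivAt
      (fun s => B.mulVec (JMP k (DC cl) (DC c) (xs (lidx N j + 1)) (xs j) s)
        ⬝ᵥ JMP k cl c (xs (lidx N j + 1)) (xs j) s)
      (B.mulVec (JMP k (DC (DC cl)) (DC (DC c)) (xs (lidx N j + 1)) (xs j) t)
          ⬝ᵥ JMP k cl c (xs (lidx N j + 1)) (xs j) t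
        + B.mulVec (JMP k (DC cl) (DC c) (xs (lidx N j + 1)) (xs j) t)
          ⬝ᵥ JMP k (DC cl) (DC c) (xs (lidx N j + 1)) (xs j) t) t :=
    hasDerivAt_dot
      (fun i => hasDerivAt_mulVec B (jmp_hasDerivAt (dc_smooth hcl) (dc_smooth hc)
        (xs (lidx N j + 1)) (xs j) t) i)
      (jmp_hasDerivAt hcl hc (xs (lidx N j + 1)) (xs j) t)
  have hE : HasDerivAt (fun s =>
        (∫ x in (xs j)..(xs (j+1)),
            (S (PT k c s x) - (1/2) * (K.mulVec (PX k c s x) ⬝ᵥ PT k c s x)))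
          - ((1/2) * (FLX k K A B c cr (xs (j+1)) (xs ((j+1) % N)) s ⬝ᵥ PT k c s (xs (j+1)))
              + (1/4) * (B.mulVec (JMP k (DC c) (DC cr) (xs (j+1)) (xs ((j+1) % N)) s) ⬝ᵥ JMP k c cr (xs (j+1)) (xs ((j+1) % N)) s))
          + ((1/2) * (FLX k K A B cl c (xs (lidx N j + 1)) (xs j) s ⬝ᵥ PT k c s (xs j))
              - (1/4) * (B.mulVec (JMP k (DC cl) (DC c) (xs (lidx N j + 1)) (xs j) s) ⬝ᵥ JMP k cl c (xs (lidx N j + 1)) (xs j) s)))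
      ((∫ x in (xs j)..(xs (j+1)),
            (gradS S (PT k c t x) ⬝ᵥ PT k (DC c) t x
              - (1/2) * (K.mulVec (PX k (DC c) t x) ⬝ᵥ PT k c t x
                  + K.mulVec (PX k c t x) ⬝ᵥ PT k (DC c) t x)))
          - ((1/2) * (FLX k K A B (DC c) (DC cr) (xs (j+1)) (xs ((j+1) % N)) t ⬝ᵥ PT k c t (xs (j+1))
                + FLX k K A B c cr (xs (j+1)) (xs ((j+1) % N)) t ⬝ᵥ PT k (DC c) t (xs (j+1)))
              + (1/4) * (B.mulVec (JMP k (DC (DC c)) (DC (DC cr)) (xs (j+1)) (xs ((j+1) % N)) t) ⬝ᵥ JMP k c cr (xs (j+1)) (xs ((j+1) % N)) t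
                + B.mulVec (JMP k (DC c) (DC cr) (xs (j+1)) (xs ((j+1) % N)) t) ⬝ᵥ JMP k (DC c) (DC cr) (xs (j+1)) (xs ((j+1) % N)) t))
          + ((1/2) * (FLX k K A B (DC cl) (DC c) (xs (lidx N j + 1)) (xs j) t ⬝ᵥ PT k c t (xs j)
                + FLX k K A B cl c (xs (lidx N j + 1)) (xs j) t ⬝ᵥ PT k (DC c) t (xs j))
              - (1/4) * (B.mulVec (JMP k (DC (DC cl)) (DC (DC c)) (xs (lidx N j + 1)) (xs j) t) ⬝ᵥ JMP k cl c (xs (lidx N j + 1)) (xs j) t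
                + B.mulVec (JMP k (DC cl) (DC c) (xs (lidx N j + 1)) (xs j) t) ⬝ᵥ JMP k (DC cl) (DC c) (xs (lidx N j + 1)) (xs j) t))) t :=
    (hI.sub ((HasDerivAt.const_mul ((1/2 : ℝ)) hXr).add
      (HasDerivAt.const_mul ((1/4 : ℝ)) hYr))).add
      ((HasDerivAt.const_mul ((1/2 : ℝ)) hXl).sub (HasDerivAt.const_mul ((1/4 : ℝ)) hYl))
  have hbig : HasDerivAt (fun s =>
        (∫ x in (xs j)..(xs (j+1)),
            (S (z j s x) - (1/2) * (K.mulVec (deriv (fun y => z j s y) x) ⬝ᵥ z j s x)))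
          - ((1/2) * (numFluxv N xs K A B z j s ⬝ᵥ trLv xs z j s)
              + (1/4) * (B.mulVec (deriv (fun r => jmpv N xs z j r) s) ⬝ᵥ jmpv N xs z j s))
          + ((1/2) * (numFluxv N xs K A B z (lidx N j) s ⬝ᵥ trRv N xs z (lidx N j) s)
              - (1/4) * (B.mulVec (deriv (fun r => jmpv N xs z (lidx N j) r) s)
                  ⬝ᵥ jmpv N xs z (lidx N j) s)))
      ((∫ x in (xs j)..(xs (j+1)),
            (gradS S (PT k c t x) ⬝ᵥ PT k (DC c) t x
              - (1/2) * (K.mulVec (PX k (DC c) t x) ⬝ᵥ PT k c t x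
                  + K.mulVec (PX k c t x) ⬝ᵥ PT k (DC c) t x)))
          - ((1/2) * (FLX k K A B (DC c) (DC cr) (xs (j+1)) (xs ((j+1) % N)) t ⬝ᵥ PT k c t (xs (j+1))
                + FLX k K A B c cr (xs (j+1)) (xs ((j+1) % N)) t ⬝ᵥ PT k (DC c) t (xs (j+1)))
              + (1/4) * (B.mulVec (JMP k (DC (DC c)) (DC (DC cr)) (xs (j+1)) (xs ((j+1) % N)) t) ⬝ᵥ JMP k c cr (xs (j+1)) (xs ((j+1) % N)) t
                + B.mulVec (JMP k (DC c) (DC cr) (xs (j+1)) (xs ((j+1) % N)) t) ⬝ᵥ JMP k (DC c) (DC cr) (xs (j+1)) (xs ((j+1) % N)) t))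
          + ((1/2) * (FLX k K A B (DC cl) (DC c) (xs (lidx N j + 1)) (xs j) t ⬝ᵥ PT k c t (xs j)
                + FLX k K A B cl c (xs (lidx N j + 1)) (xs j) t ⬝ᵥ PT k (DC c) t (xs j))
              - (1/4) * (B.mulVec (JMP k (DC (DC cl)) (DC (DC c)) (xs (lidx N j + 1)) (xs j) t) ⬝ᵥ JMP k cl c (xs (lidx N j + 1)) (xs j) t
                + B.mulVec (JMP k (DC cl) (DC c) (xs (lidx N j + 1)) (xs j) t) ⬝ᵥ JMP k (DC cl) (DC c) (xs (lidx N j + 1)) (xs j) t))) t := by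
    rw [hEfun]; exact hE
  rw [hbig.deriv, hcalF_r, hcalF_l]
  -- the DG scheme tested with the time derivative
  have hsch := hscheme j hj t (fun x => PT k (DC c) t x) (fun i => pt_poly (DC c) t i)
  beta_reduce at hsch
  have r1 : (∫ x in (xs j)..(xs (j+1)),
      M.mulVec (deriv (fun s => z j s x) t) ⬝ᵥ PT k (DC c) t x) = 0 := by
    rw [intervalIntegral.integral_congr (g := fun _ => (0:ℝ))
      fun x _ => by rw [hzv1 t x]; exact skew_self hM _]
    simp
  have r2 : (∫ x in (xs j)..(xs (j+1)),
        K.mulVec (z j t x) ⬝ᵥ deriv (fun x => PT k (DC c) t x) x)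
      = ∫ x in (xs j)..(xs (j+1)), K.mulVec (PT k c t x) ⬝ᵥ PX k (DC c) t x :=
    intervalIntegral.integral_congr fun x _ => by rw [hzc t x, ptv_deriv_x]
  have r3 : (∫ x in (xs j)..(xs (j+1)), gradS S (z j t x) ⬝ᵥ PT k (DC c) t x)
      = ∫ x in (xs j)..(xs (j+1)), gradS S (PT k c t x) ⬝ᵥ PT k (DC c) t x :=
    intervalIntegral.integral_congr fun x _ => by rw [hzc t x]
  rw [r1, r2, r3, hflux_r t, hflux_l t] at hsch
  -- integration by parts
  have hiG : IntervalIntegrable (fun x => gradS S (PT k c t x) ⬝ᵥ PT k (DC c) t x)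
      MeasureTheory.volume (xs j) (xs (j+1)) :=
    (cont_dot (fun i => (grad_cont hS i).comp (continuous_pi fun i' => pt_cont_x c t i'))
      (fun i => pt_cont_x (DC c) t i)).intervalIntegrable _ _
  have hiP : IntervalIntegrable (fun x => K.mulVec (PX k (DC c) t x) ⬝ᵥ PT k c t x)
      MeasureTheory.volume (xs j) (xs (j+1)) :=
    (cont_dot (fun i => cont_mulVec K (fun i' => px_cont_x (DC c) t i') i)
      (fun i => pt_cont_x c t i)).intervalIntegrable _ _
  have hiQ : IntervalIntegrable (fun x => K.mulVec (PX k c t x) ⬝ᵥ PT k (DC c) t x)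
      MeasureTheory.volume (xs j) (xs (j+1)) :=
    (cont_dot (fun i => cont_mulVec K (fun i' => px_cont_x c t i') i)
      (fun i => pt_cont_x (DC c) t i)).intervalIntegrable _ _
  have hiR : IntervalIntegrable (fun x => K.mulVec (PT k c t x) ⬝ᵥ PX k (DC c) t x)
      MeasureTheory.volume (xs j) (xs (j+1)) :=
    (cont_dot (fun i => cont_mulVec K (fun i' => pt_cont_x c t i') i)
      (fun i => px_cont_x (DC c) t i)).intervalIntegrable _ _
  have hIBP : (∫ x in (xs j)..(xs (j+1)),
        (K.mulVec (PX k c t x) ⬝ᵥ PT k (DC c) t x + K.mulVec (PT k c t x) ⬝ᵥ PX k (DC c) t x))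
      = K.mulVec (PT k c t (xs (j+1))) ⬝ᵥ (PT k (DC c) t (xs (j+1))) - K.mulVec (PT k c t (xs j)) ⬝ᵥ (PT k (DC c) t (xs j)) := by
    refine intervalIntegral.integral_eq_sub_of_hasDerivAt (f := fun x => K.mulVec (PT k c t x) ⬝ᵥ PT k (DC c) t x) (fun x _ => ?_) ?_
    · exact hasDerivAt_dot (fun i => hasDerivAt_mulVec K (fun i' => pt_hasDerivAt_x c t x i') i)
        (fun i => pt_hasDerivAt_x (DC c) t x i)
    · exact hiQ.add hiR
  have hIBPs : (∫ x in (xs j)..(xs (j+1)), K.mulVec (PX k c t x) ⬝ᵥ PT k (DC c) t x)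
        + (∫ x in (xs j)..(xs (j+1)), K.mulVec (PT k c t x) ⬝ᵥ PX k (DC c) t x)
      = K.mulVec (PT k c t (xs (j+1))) ⬝ᵥ (PT k (DC c) t (xs (j+1))) - K.mulVec (PT k c t (xs j)) ⬝ᵥ (PT k (DC c) t (xs j)) := by
    rw [← intervalIntegral.integral_add hiQ hiR]; exact hIBP
  have hsplit : (∫ x in (xs j)..(xs (j+1)),
            (gradS S (PT k c t x) ⬝ᵥ PT k (DC c) t x
              - (1/2) * (K.mulVec (PX k (DC c) t x) ⬝ᵥ PT k c t x
                  + K.mulVec (PX k c t x) ⬝ᵥ PT k (DC c) t x)))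
      = (∫ x in (xs j)..(xs (j+1)), gradS S (PT k c t x) ⬝ᵥ PT k (DC c) t x)
        - (1/2) * ((∫ x in (xs j)..(xs (j+1)), K.mulVec (PX k (DC c) t x) ⬝ᵥ PT k c t x)
            + (∫ x in (xs j)..(xs (j+1)), K.mulVec (PX k c t x) ⬝ᵥ PT k (DC c) t x)) := by
    rw [intervalIntegral.integral_sub hiG (((hiP.add hiQ).const_mul ((1/2:ℝ))))]
    rw [intervalIntegral.integral_const_mul, intervalIntegral.integral_add hiP hiQ]
  have hflipint : (∫ x in (xs j)..(xs (j+1)), K.mulVec (PX k (DC c) t x) ⬝ᵥ PT k c t x)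
      = -(∫ x in (xs j)..(xs (j+1)), K.mulVec (PT k c t x) ⬝ᵥ PX k (DC c) t x) := by
    rw [← intervalIntegral.integral_neg]
    exact intervalIntegral.integral_congr fun x _ => by rw [flip_skew hK]
  rw [hsplit, hflipint]
  simp only [FLX, AVG, JMP, Matrix.mulVec_add, Matrix.mulVec_sub, Matrix.mulVec_smul,
    add_dotProduct, sub_dotProduct, smul_dotProduct, dotProduct_add, dotProduct_sub,
    dotProduct_smul, smul_eq_mul] at hsch ⊢
  linarith [hsch, hIBPs,
    flip_skew hK (PT k cr t (xs ((j+1) % N))) (PT k (DC cr) t (xs ((j+1) % N))),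
    flip_skew hK (PT k (DC cr) t (xs ((j+1) % N))) (PT k cr t (xs ((j+1) % N))),
    flip_symm hA (PT k cr t (xs ((j+1) % N))) (PT k (DC cr) t (xs ((j+1) % N))),
    flip_symm hA (PT k (DC cr) t (xs ((j+1) % N))) (PT k cr t (xs ((j+1) % N))),
    flip_skew hK (PT k cr t (xs ((j+1) % N))) (PT k (DC c) t (xs (j+1))),
    flip_skew hK (PT k (DC c) t (xs (j+1))) (PT k cr t (xs ((j+1) % N))),
    flip_symm hA (PT k cr t (xs ((j+1) % N))) (PT k (DC c) t (xs (j+1))),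
    flip_symm hA (PT k (DC c) t (xs (j+1))) (PT k cr t (xs ((j+1) % N))),
    flip_skew hK (PT k c t (xs (j+1))) (PT k (DC cr) t (xs ((j+1) % N))),
    flip_skew hK (PT k (DC cr) t (xs ((j+1) % N))) (PT k c t (xs (j+1))),
    flip_symm hA (PT k c t (xs (j+1))) (PT k (DC cr) t (xs ((j+1) % N))),
    flip_symm hA (PT k (DC cr) t (xs ((j+1) % N))) (PT k c t (xs (j+1))),
    flip_skew hK (PT k c t (xs (j+1))) (PT k (DC c) t (xs (j+1))),
    flip_skew hK (PT k (DC c) t (xs (j+1))) (PT k c t (xs (j+1))),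
    flip_symm hA (PT k c t (xs (j+1))) (PT k (DC c) t (xs (j+1))),
    flip_symm hA (PT k (DC c) t (xs (j+1))) (PT k c t (xs (j+1))),
    skew_self hB (PT k (DC cr) t (xs ((j+1) % N))),
    skew_self hB (PT k (DC c) t (xs (j+1))),
    flip_skew hB (PT k (DC cr) t (xs ((j+1) % N))) (PT k (DC c) t (xs (j+1))),
    flip_skew hB (PT k (DC c) t (xs (j+1))) (PT k (DC cr) t (xs ((j+1) % N))),
    flip_skew hK (PT k c t (xs j)) (PT k (DC c) t (xs j)),
    flip_skew hK (PT k (DC c) t (xs j)) (PT k c t (xs j)),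
    flip_symm hA (PT k c t (xs j)) (PT k (DC c) t (xs j)),
    flip_symm hA (PT k (DC c) t (xs j)) (PT k c t (xs j)),
    flip_skew hK (PT k c t (xs j)) (PT k (DC cl) t (xs (lidx N j + 1))),
    flip_skew hK (PT k (DC cl) t (xs (lidx N j + 1))) (PT k c t (xs j)),
    flip_symm hA (PT k c t (xs j)) (PT k (DC cl) t (xs (lidx N j + 1))),
    flip_symm hA (PT k (DC cl) t (xs (lidx N j + 1))) (PT k c t (xs j)),
    flip_skew hK (PT k cl t (xs (lidx N j + 1))) (PT k (DC c) t (xs j)),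
    flip_skew hK (PT k (DC c) t (xs j)) (PT k cl t (xs (lidx N j + 1))),
    flip_symm hA (PT k cl t (xs (lidx N j + 1))) (PT k (DC c) t (xs j)),
    flip_symm hA (PT k (DC c) t (xs j)) (PT k cl t (xs (lidx N j + 1))),
    flip_skew hK (PT k cl t (xs (lidx N j + 1))) (PT k (DC cl) t (xs (lidx N j + 1))),
    flip_skew hK (PT k (DC cl) t (xs (lidx N j + 1))) (PT k cl t (xs (lidx N j + 1))),
    flip_symm hA (PT k cl t (xs (lidx N j + 1))) (PT k (DC cl) t (xs (lidx N j + 1))),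
    flip_symm hA (PT k (DC cl) t (xs (lidx N j + 1))) (PT k cl t (xs (lidx N j + 1))),
    skew_self hB (PT k (DC c) t (xs j)),
    skew_self hB (PT k (DC cl) t (xs (lidx N j + 1))),
    flip_skew hB (PT k (DC c) t (xs j)) (PT k (DC cl) t (xs (lidx N j + 1))),
    flip_skew hB (PT k (DC cl) t (xs (lidx N j + 1))) (PT k (DC c) t (xs j))]
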